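/- Let G = (V, E) be a finite simple graph, let ω ∈ ℝ^V, and for each edge e ∈ E let f_e : ℝ → ℝ be an odd function such that every fiber f_e⁻¹(y) has at most d elements. Let X = {x ∈ ℝ^V : for every v ∈ V, ω_v + Σ_{w ∈ N(v)} f_{{w,v}}(x_w − x_v) = 0} be the set of equilibria of the associated network dynamics. Then X is d-compatible with G, and for every induced forest W ⊆ V of G without isolated vertices, with l leaves and c connected components, cdim(X) ≤ |V| − |W| + l − c. -/

import Mathlib

/-- `x_A` `d`-determines `x_B`. -/
def Determines {V : Type*} {F : V → Type*} (S : Set (∀ v, F v))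
    (A B : Set V) (d : ℕ) : Prop :=
  ∀ c : ∀ a : A, F a,
    ((fun x : ∀ v, F v => fun b : B => x b) ''
      {x ∈ S | ∀ a : A, x a = c a}).encard ≤ (d : ℕ∞)

/-- `S` is `d`-compatible with the graph `G`. -/
def Compatible {V : Type*} {F : V → Type*} (S : Set (∀ v, F v))
    (G : SimpleGraph V) (d : ℕ) : Prop :=
  ∀ v w, G.Adj v w →
    Determines S ((insert v (G.neighborSet v)) \ {w}) {w} d

/-- The combinatorial dimension of `S`. -/
noncomputable def cdim {V : Type*} {F : V → Type*} (S : Set (∀ v, F v)) : ℕ :=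
  sInf {n : ℕ | ∃ A : Set V, A.ncard = n ∧ ∃ d : ℕ, Determines S A Set.univ d}

/-!
At an equilibrium, the equation at `v` fixes `f {w,v} (x_w - x_v)` once `x` is known on
`N[v] \ {w}`, so `x_w` takes at most `d` values; this is `d`-compatibility, and it lets finitely
determined coordinates propagate along edges. In an induced forest `W`, knowing `x` off `W` and
at all leaves but one of each component, the values propagate from the leaves inwards to every
vertex, and this set has `|V| - |W| + l - c` elements. The count is proved by deleting a vertex of
degree at most one at a time, weighting leaves by one and isolated vertices by two so that the
induction closes.
-/

open Set SimpleGraph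

theorem finsum_mem_eq_add_finsum_mem_diff_singleton {α M : Type*} [AddCommMonoid M] {s : Set α}
    {a : α} (hs : s.Finite) (ha : a ∈ s) (g : α → M) :
    ∑ᶠ i ∈ s, g i = g a + ∑ᶠ i ∈ s \ {a}, g i := by
  rw [← finsum_mem_insert g (show a ∉ s \ {a} from fun h ↦ h.2 rfl) (hs.subset sdiff_subset),
    insert_sdiff_singleton, insert_eq_of_mem ha]

section

variable {V : Type*} {F : V → Type*} {S : Set (∀ v, F v)} {A A' B C : Set V} {d d₁ d₂ : ℕ}

namespace Determines

theorem of_subset (h : B ⊆ A) : Determines S A B 1 := by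
  intro c
  refine Set.encard_le_one_iff.mpr ?_
  rintro _ _ ⟨x, ⟨-, hx⟩, rfl⟩ ⟨y, ⟨-, hy⟩, rfl⟩
  funext b
  exact (hx ⟨b, h b.2⟩).trans (hy ⟨b, h b.2⟩).symm

theorem mono_left (h : Determines S A B d) (hAA' : A ⊆ A') : Determines S A' B d := by
  intro c
  refine (encard_mono (image_mono ?_)).trans (h fun a ↦ c ⟨a, hAA' a.2⟩)
  exact fun x hx ↦ ⟨hx.1, fun a ↦ hx.2 ⟨a, hAA' a.2⟩⟩

theorem union_right (h : Determines S A B d) : Determines S A (B ∪ A) d := by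
  intro c
  set P := {x ∈ S | ∀ a : A, x a = c a}
  let res : (∀ b : ↥(B ∪ A), F b) → ∀ b : B, F b := fun y b ↦ y ⟨b, mem_union_left A b.2⟩
  have hres : InjOn res ((fun x : ∀ v, F v ↦ fun b : ↥(B ∪ A) ↦ x b) '' P) := by
    rintro _ ⟨x, hx, rfl⟩ _ ⟨y, hy, rfl⟩ hxy
    funext b
    obtain ⟨b, hb | hb⟩ := b
    · exact congrFun hxy ⟨b, hb⟩
    · exact (hx.2 ⟨b, hb⟩).trans (hy.2 ⟨b, hb⟩).symm
  rw [← hres.encard_image, ← image_comp]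
  exact h c

theorem trans (h₁ : Determines S A B d₁) (h₂ : Determines S B C d₂) :
    Determines S A C (d₁ * d₂) := by
  intro c
  set U := (fun x : ∀ v, F v ↦ fun b : B ↦ x b) '' {x ∈ S | ∀ a : A, x a = c a}
  have hU : U.Finite := finite_of_encard_le_coe (h₁ c)
  calc _ ≤ (⋃ b ∈ hU.toFinset,
          (fun x : ∀ v, F v ↦ fun c : C ↦ x c) '' {x ∈ S | ∀ b' : B, x b' = b b'}).encard := by
        refine encard_mono ?_
        rintro _ ⟨x, hx, rfl⟩
        exact mem_biUnion (hU.mem_toFinset.mpr ⟨x, hx, rfl⟩) ⟨x, ⟨hx.1, fun _ ↦ rfl⟩, rfl⟩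
    _ ≤ ∑ b ∈ hU.toFinset, ((fun x : ∀ v, F v ↦ fun c : C ↦ x c) ''
          {x ∈ S | ∀ b' : B, x b' = b b'}).encard := Finset.set_encard_biUnion_le _ _
    _ ≤ hU.toFinset.card • (d₂ : ℕ∞) := Finset.sum_le_card_nsmul _ _ _ fun b _ ↦ h₂ b
    _ ≤ ((d₁ * d₂ : ℕ) : ℕ∞) := by
        rw [nsmul_eq_mul, Nat.cast_mul]
        refine mul_le_mul_left ?_ _
        rw [← hU.encard_eq_coe_toFinset_card]
        exact h₁ c

end Determines

theorem determines_singleton_of_encard_image_le {w : V}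
    (h : ∀ c : ∀ a : A, F a,
      ((fun x : ∀ v, F v ↦ x w) '' {x ∈ S | ∀ a : A, x a = c a}).encard ≤ d) :
    Determines S A {w} d := by
  intro c
  have hev : Function.Injective fun y : (∀ b : ({w} : Set V), F b) ↦ y ⟨w, rfl⟩ := by
    intro y y' hyy'
    funext ⟨b, hb⟩
    subst hb
    exact hyy'
  rw [← hev.injOn.encard_image, ← image_comp]
  exact h c

theorem cdim_le_ncard (h : Determines S A univ d) : cdim S ≤ A.ncard :=
  Nat.sInf_le ⟨A, rfl, d, h⟩

end

namespace SimpleGraph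

variable {V : Type*} {G : SimpleGraph V}

variable (G) in
/-- `G.Spans A` says that all of `V` is reached from `A` by repeatedly adding a vertex `w` as
soon as `N[v] \ {w}` is present for some neighbour `v` of `w`. -/
inductive Spans : Set V → Prop
  | univ : Spans univ
  | step {A : Set V} {v w : V} : G.Adj v w → insert v (G.neighborSet v) \ {w} ⊆ A →
      Spans (insert w A) → Spans A

theorem Spans.mono {A B : Set V} (h : G.Spans A) (hAB : A ⊆ B) : G.Spans B := by
  induction h generalizing B with
  | univ => rw [univ_subset_iff.mp hAB]; exact .univ
  | step hvw hA _ ih => exact .step hvw (hA.trans hAB) (ih (insert_subset_insert hAB))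

theorem Spans.exists_determines_univ {F : V → Type*} {X : Set (∀ v, F v)} {d : ℕ}
    (hX : Compatible X G d) {A : Set V} (h : G.Spans A) :
    ∃ d', Determines X A Set.univ d' := by
  induction h with
  | univ => exact ⟨1, .of_subset subset_rfl⟩
  | step hvw hA _ ih =>
    obtain ⟨d', hd'⟩ := ih
    rw [← singleton_union] at hd'
    exact ⟨d * d', ((hX _ _ hvw).mono_left hA).union_right.trans hd'⟩

section Equilibria

variable [Fintype V] [DecidableRel G.Adj]

variable (G) in
/-- The equilibria of `ẋ_v = ω_v + ∑_{w ∈ N(v)} f {w,v} (x_w - x_v)`. -/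
def networkEquilibria (ω : V → ℝ) (f : Sym2 V → ℝ → ℝ) : Set (V → ℝ) :=
  {x | ∀ v, ω v + ∑ w ∈ G.neighborFinset v, f s(w, v) (x w - x v) = 0}

theorem apply_sub_eq_of_mem_networkEquilibria {ω : V → ℝ} {f : Sym2 V → ℝ → ℝ} {x y : V → ℝ}
    (hx : x ∈ G.networkEquilibria ω f) (hy : y ∈ G.networkEquilibria ω f) {v w : V}
    (hvw : G.Adj v w) (hxy : ∀ u ∈ insert v (G.neighborSet v) \ {w}, x u = y u) :
    f s(w, v) (x w - x v) = f s(w, v) (y w - y v) := by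
  classical
  have hrest : ∑ u ∈ (G.neighborFinset v).erase w, f s(u, v) (x u - x v) =
      ∑ u ∈ (G.neighborFinset v).erase w, f s(u, v) (y u - y v) := by
    refine Finset.sum_congr rfl fun u hu ↦ ?_
    obtain ⟨huw, hu⟩ := Finset.mem_erase.mp hu
    rw [hxy u ⟨mem_insert_of_mem _ (by simpa using hu), huw⟩,
      hxy v ⟨mem_insert _ _, hvw.ne⟩]
  have hw : w ∈ G.neighborFinset v := by simpa using hvw
  have hxv := hx v
  have hyv := hy v
  rw [← Finset.add_sum_erase _ _ hw] at hxv hyv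
  linarith

theorem compatible_networkEquilibria (ω : V → ℝ) {f : Sym2 V → ℝ → ℝ} {d : ℕ}
    (hfib : ∀ e ∈ G.edgeSet, ∀ y : ℝ, {z : ℝ | f e z = y}.encard ≤ d) :
    Compatible (G.networkEquilibria ω f) G d := by
  intro v w hvw
  refine determines_singleton_of_encard_image_le fun c ↦ ?_
  have hvA : v ∈ insert v (G.neighborSet v) \ {w} := ⟨mem_insert _ _, hvw.ne⟩
  rcases eq_empty_or_nonempty {x ∈ G.networkEquilibria ω f |
    ∀ a : ↥(insert v (G.neighborSet v) \ {w}), x a = c a} with hP | ⟨x₀, hx₀⟩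
  · rw [hP, image_empty, encard_empty]
    exact zero_le
  calc _ ≤ ((· + c ⟨v, hvA⟩) '' {z | f s(w, v) z = f s(w, v) (x₀ w - x₀ v)}).encard := by
        refine encard_mono ?_
        rintro _ ⟨x, hx, rfl⟩
        refine ⟨x w - x v, apply_sub_eq_of_mem_networkEquilibria hx.1 hx₀.1 hvw fun u hu ↦ ?_,
          by rw [← hx.2 ⟨v, hvA⟩]; ring⟩
        exact (hx.2 ⟨u, hu⟩).trans (hx₀.2 ⟨u, hu⟩).symm
    _ ≤ _ := encard_image_le _ _
    _ ≤ d := hfib _ (G.mem_edgeSet.mpr hvw.symm) _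

end Equilibria

theorem Reachable.apply_eq_of_forall_adj {β : Sort*} {f : V → β}
    (hf : ∀ v w, G.Adj v w → f v = f w) {v w : V} (h : G.Reachable v w) : f v = f w := by
  obtain ⟨q⟩ := h
  induction q with
  | nil => rfl
  | cons hadj _ ih => exact (hf _ _ hadj).trans ih

theorem IsAcyclic.exists_subsingleton_neighborSet [Finite V] [Nonempty V] (h : G.IsAcyclic) :
    ∃ u, (G.neighborSet u).Subsingleton := by
  obtain ⟨u, v, p, hp, hmax⟩ := Walk.exists_isPath_forall_isPath_length_le_length G
  have hsnd : ∀ w, G.Adj u w → w = p.snd := fun w hw ↦ h.eq_snd_of_adj_start hp hw <| by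
    by_contra hwp
    have := hmax _ _ _ (hp.cons hwp (h := hw.symm))
    simp at this
  exact ⟨u, fun w hw w' hw' ↦ (hsnd w hw).trans (hsnd w' hw').symm⟩

theorem exists_ncard_neighborSet_inter_le_one [Finite V] {W : Set V} (hW : W.Nonempty)
    (hac : (G.induce W).IsAcyclic) : ∃ u ∈ W, (G.neighborSet u ∩ W).ncard ≤ 1 := by
  have := hW.to_subtype
  obtain ⟨u, hu⟩ := hac.exists_subsingleton_neighborSet
  refine ⟨u, u.2, ncard_le_one_iff_subsingleton.mpr fun a ha b hb ↦ ?_⟩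
  exact congrArg Subtype.val (hu (show G.Adj u a from ha.1) (show G.Adj u b from hb.1) :
    (⟨a, ha.2⟩ : W) = ⟨b, hb.2⟩)

variable {W : Set V} {u p : V}

theorem natCard_connectedComponent_induce_diff_leaf (hN : G.neighborSet u ∩ W = {p}) :
    Nat.card (G.induce (W \ {u})).ConnectedComponent =
      Nat.card (G.induce W).ConnectedComponent := by
  classical
  have hp : p ∈ G.neighborSet u ∩ W := hN ▸ rfl
  have hpW' : p ∈ W \ {u} := ⟨hp.2, hp.1.ne'⟩
  let r : W → (G.induce (W \ {u})).ConnectedComponent := fun v ↦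
    if h : v.1 = u then connectedComponentMk _ ⟨p, hpW'⟩ else connectedComponentMk _ ⟨v, v.2, h⟩
  have hr : ∀ v w, (G.induce W).Adj v w → r v = r w := by
    rintro ⟨v, hv⟩ ⟨w, hw⟩ (hvw : G.Adj v w)
    have hN' : ∀ b ∈ W, G.Adj u b → b = p := fun b hb hub ↦
      (hN ▸ ⟨hub, hb⟩ : b ∈ ({p} : Set V))
    by_cases hvu : v = u
    · subst hvu
      simp [r, hN' w hw hvw, hp.1.ne']
    by_cases hwu : w = u
    · subst hwu
      simp [r, hN' v hv hvw.symm]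
    simp only [r, dif_neg hvu, dif_neg hwu]
    exact ConnectedComponent.connectedComponentMk_eq_of_adj (G := G.induce (W \ {u})) hvw
  refine Nat.card_congr
    ⟨ConnectedComponent.map (G.induceHomOfLE sdiff_subset).toHom,
      ConnectedComponent.lift r fun v w q _ ↦ q.reachable.apply_eq_of_forall_adj hr, ?_, ?_⟩
  · exact fun C ↦ C.ind fun v ↦ dif_neg v.2.2
  · refine fun C ↦ C.ind fun v ↦ ?_
    simp only [ConnectedComponent.lift_mk, r]
    split_ifs with hvu
    · exact ConnectedComponent.sound
        (show (G.induce W).Adj ⟨p, hp.2⟩ v from hvu ▸ hp.1.symm).reachable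
    · rfl

theorem natCard_connectedComponent_induce_diff_isolated [Finite V] (hu : u ∈ W)
    (hN : G.neighborSet u ∩ W = ∅) :
    Nat.card (G.induce W).ConnectedComponent =
      Nat.card (G.induce (W \ {u})).ConnectedComponent + 1 := by
  classical
  let r : W → Option (G.induce (W \ {u})).ConnectedComponent := fun v ↦
    if h : v.1 = u then none else some (connectedComponentMk _ ⟨v, v.2, h⟩)
  have hr : ∀ v w, (G.induce W).Adj v w → r v = r w := by
    rintro ⟨v, hv⟩ ⟨w, hw⟩ (hvw : G.Adj v w)
    have hnu : ∀ b ∈ W, ¬G.Adj u b := fun b hb hub ↦ (hN ▸ ⟨hub, hb⟩ : b ∈ (∅ : Set V))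
    have hvu : v ≠ u := fun h ↦ hnu w hw (h ▸ hvw)
    have hwu : w ≠ u := fun h ↦ hnu v hv (h ▸ hvw.symm)
    simp only [r, dif_neg hvu, dif_neg hwu]
    exact congrArg some
      (ConnectedComponent.connectedComponentMk_eq_of_adj (G := G.induce (W \ {u})) hvw)
  rw [← Finite.card_option]
  refine Nat.card_congr
    ⟨ConnectedComponent.lift r fun v w q _ ↦ q.reachable.apply_eq_of_forall_adj hr,
      fun o ↦ o.elim (connectedComponentMk _ ⟨u, hu⟩)
        (ConnectedComponent.map (G.induceHomOfLE sdiff_subset).toHom), ?_, ?_⟩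
  · refine fun C ↦ C.ind fun v ↦ ?_
    simp only [ConnectedComponent.lift_mk, r]
    split_ifs with hvu
    · exact congrArg _ (Subtype.ext hvu.symm)
    · rfl
  · rintro (_ | C)
    · exact dif_pos rfl
    · exact C.ind fun v ↦ dif_neg v.2.2

theorem neighborSet_inter_diff_singleton_of_not_adj {v : V} (h : ¬G.Adj v u) :
    G.neighborSet v ∩ (W \ {u}) = G.neighborSet v ∩ W := by
  rw [← inter_sdiff_assoc, sdiff_singleton_eq_self fun hu ↦ h hu.1]

theorem ncard_neighborSet_inter_diff_singleton_of_adj [Finite V] {v : V} (h : G.Adj v u)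
    (hu : u ∈ W) : (G.neighborSet v ∩ (W \ {u})).ncard = (G.neighborSet v ∩ W).ncard - 1 := by
  have hmem : u ∈ G.neighborSet v ∩ W := ⟨h, hu⟩
  rw [← inter_sdiff_assoc, ncard_sdiff_singleton_of_mem hmem]

variable (G) in
/-- Each leaf of `G[W]` contributes `1`, each isolated vertex `2`, and every other vertex `0`
(by truncated subtraction). -/
noncomputable def leafWeight (W : Set V) : ℕ :=
  ∑ᶠ v ∈ W, (2 - (G.neighborSet v ∩ W).ncard)

theorem leafWeight_eq_of_isolated [Finite V] (hu : u ∈ W) (hN : G.neighborSet u ∩ W = ∅) :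
    G.leafWeight W = G.leafWeight (W \ {u}) + 2 := by
  rw [leafWeight, finsum_mem_eq_add_finsum_mem_diff_singleton (toFinite W) hu, hN, ncard_empty,
    add_comm, leafWeight]
  refine congrArg (· + 2) (finsum_mem_congr rfl fun v hv ↦ ?_)
  rw [neighborSet_inter_diff_singleton_of_not_adj fun h ↦
    eq_empty_iff_forall_notMem.mp hN v ⟨h.symm, hv.1⟩]

theorem leafWeight_add_of_leaf [Finite V] (hu : u ∈ W) (hN : G.neighborSet u ∩ W = {p}) :
    G.leafWeight W + (2 - (G.neighborSet p ∩ (W \ {u})).ncard) =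
      G.leafWeight (W \ {u}) + 1 + (2 - (G.neighborSet p ∩ W).ncard) := by
  have hp : p ∈ G.neighborSet u ∩ W := hN ▸ rfl
  have hrest : ∑ᶠ v ∈ (W \ {u}) \ {p}, (2 - (G.neighborSet v ∩ W).ncard) =
      ∑ᶠ v ∈ (W \ {u}) \ {p}, (2 - (G.neighborSet v ∩ (W \ {u})).ncard) := by
    refine finsum_mem_congr rfl fun v hv ↦ ?_
    rw [neighborSet_inter_diff_singleton_of_not_adj fun h ↦
      hv.2 ((eq_singleton_iff_unique_mem.mp hN).2 v ⟨h.symm, hv.1.1⟩)]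
  have hsplit (g : V → ℕ) := finsum_mem_eq_add_finsum_mem_diff_singleton (toFinite (W \ {u}))
    (⟨hp.2, hp.1.ne'⟩ : p ∈ W \ {u}) g
  rw [leafWeight, leafWeight, finsum_mem_eq_add_finsum_mem_diff_singleton (toFinite W) hu, hN,
    ncard_singleton, hsplit, hsplit, hrest]
  ring

theorem spans_compl_union_of_leaf {S S' : Set V} (hN : G.neighborSet u ∩ W = {p})
    (huS : u ∈ S) (hS' : S' \ {p} ⊆ S) (h : G.Spans ((W \ {u})ᶜ ∪ S')) : G.Spans (Wᶜ ∪ S) := by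
  have hp : p ∈ G.neighborSet u ∩ W := hN ▸ rfl
  refine .step hp.1 ?_ (h.mono ?_)
  · rintro x ⟨rfl | hx, hxp⟩
    · exact .inr huS
    · exact .inl fun hxW ↦ hxp ((eq_singleton_iff_unique_mem.mp hN).2 x ⟨hx, hxW⟩)
  · rintro x (hx | hx)
    · by_cases hxW : x ∈ W
      · exact .inr (.inr ((show x = u by simpa [hxW] using hx) ▸ huS))
      · exact .inr (.inl hxW)
    · by_cases hxp : x = p
      · exact .inl hxp
      · exact .inr (.inr (hS' ⟨hx, hxp⟩))

theorem exists_ncard_neighborSet_inter_le_one_of_subsingleton [Finite V] {W T : Set V}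
    (hW : W.Nonempty) (hac : (G.induce W).IsAcyclic) (hT : T.Subsingleton) :
    ∃ u ∈ W, (G.neighborSet u ∩ W).ncard ≤ 1 ∧
      ∀ t ∈ T ∩ W, (G.neighborSet t ∩ W).ncard ≤ 1 → t = u := by
  by_cases h : ∃ t ∈ T ∩ W, (G.neighborSet t ∩ W).ncard ≤ 1
  · obtain ⟨t, ht, htd⟩ := h
    exact ⟨t, ht.2, htd, fun t' ht' _ ↦ hT ht'.1 ht.1⟩
  · obtain ⟨u, hu, hud⟩ := exists_ncard_neighborSet_inter_le_one hW hac
    exact ⟨u, hu, hud, fun t ht htd ↦ (h ⟨t, ht, htd⟩).elim⟩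

/-- The set `T` of at most one vertex strengthens the induction: after deleting a leaf `u`, its
neighbour `p` may drop to degree at most one in `W \ {u}`, and then `p ∈ S` lets `u` replace `p`. -/
theorem exists_spans_compl_union [Finite V] (W : Set V) (hW : (G.induce W).IsAcyclic)
    (T : Set V) (hT : T.Subsingleton) :
    ∃ S ⊆ W, (∀ t ∈ T ∩ W, (G.neighborSet t ∩ W).ncard ≤ 1 → t ∈ S) ∧
      S.ncard + Nat.card (G.induce W).ConnectedComponent = G.leafWeight W ∧
      G.Spans (Wᶜ ∪ S) := by
  induction W using WellFoundedLT.induction generalizing T with | _ W ih => ?_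
  rcases W.eq_empty_or_nonempty with rfl | hne
  · refine ⟨∅, empty_subset _, by simp, by simp [leafWeight], by simpa using Spans.univ⟩
  obtain ⟨u, huW, hu, huT⟩ := exists_ncard_neighborSet_inter_le_one_of_subsingleton hne hW hT
  have hTu (S : Set V) : ∀ t ∈ T ∩ W, (G.neighborSet t ∩ W).ncard ≤ 1 → t ∈ insert u S :=
    fun t ht htd ↦ huT t ht htd ▸ mem_insert _ _
  have hlt : W \ {u} < W := sdiff_singleton_ssubset.mpr huW
  have hW' : (G.induce (W \ {u})).IsAcyclic := hW.embedding (G.induceHomOfLE sdiff_subset)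
  rcases Nat.le_one_iff_eq_zero_or_eq_one.mp hu with h0 | h1
  · have hN : G.neighborSet u ∩ W = ∅ := (ncard_eq_zero).mp h0
    obtain ⟨S, hSW, -, hcount, hspan⟩ := ih _ hlt hW' ∅ subsingleton_empty
    refine ⟨insert u S, insert_subset huW (hSW.trans sdiff_subset), hTu S, ?_, hspan.mono ?_⟩
    · rw [ncard_insert_of_notMem fun h ↦ (hSW h).2 rfl,
        natCard_connectedComponent_induce_diff_isolated huW hN, leafWeight_eq_of_isolated huW hN]
      omega
    · intro x
      simp only [mem_union, mem_compl_iff, mem_sdiff, mem_singleton_iff, mem_insert_iff]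
      tauto
  obtain ⟨p, hN⟩ := ncard_eq_one.mp h1
  have hp : p ∈ G.neighborSet u ∩ W := hN ▸ rfl
  have hdeg := ncard_neighborSet_inter_diff_singleton_of_adj hp.1.symm huW
  have hpos : 0 < (G.neighborSet p ∩ W).ncard := (ncard_pos).mpr ⟨u, hp.1.symm, huW⟩
  have hweight := leafWeight_add_of_leaf huW hN
  have hcc := natCard_connectedComponent_induce_diff_leaf hN
  by_cases hp2 : (G.neighborSet p ∩ W).ncard ≤ 2
  · obtain ⟨S, hSW, hpS, hcount, hspan⟩ := ih _ hlt hW' {p} subsingleton_singleton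
    have hpS : p ∈ S := hpS p ⟨rfl, hp.2, hp.1.ne'⟩ (by omega)
    refine ⟨insert u (S \ {p}), insert_subset huW (sdiff_subset.trans (hSW.trans sdiff_subset)),
      hTu _, ?_, spans_compl_union_of_leaf hN (mem_insert _ _) (subset_insert _ _) hspan⟩
    have := (ncard_pos).mpr ⟨p, hpS⟩
    rw [ncard_insert_of_notMem fun h ↦ (hSW h.1).2 rfl, ncard_sdiff_singleton_of_mem hpS]
    omega
  · obtain ⟨S, hSW, -, hcount, hspan⟩ := ih _ hlt hW' ∅ subsingleton_empty
    refine ⟨insert u S, insert_subset huW (hSW.trans sdiff_subset), hTu S, ?_,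
      spans_compl_union_of_leaf hN (mem_insert _ _) (sdiff_subset.trans (subset_insert _ _))
        hspan⟩
    rw [ncard_insert_of_notMem fun h ↦ (hSW h).2 rfl]
    omega

theorem leafWeight_eq_ncard [Finite V] (hW : ∀ v ∈ W, (G.neighborSet v ∩ W).Nonempty) :
    G.leafWeight W = {v | v ∈ W ∧ (G.neighborSet v ∩ W).ncard = 1}.ncard := by
  rw [leafWeight, ← finsum_mem_inter_support, ← finsum_one]
  refine finsum_mem_congr (ext fun v ↦ ?_) fun v hv ↦ by rw [hv.2]
  simp only [mem_inter_iff, Function.mem_support, mem_ofPred_eq]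
  refine and_congr_right fun hv ↦ ?_
  have := (ncard_pos (toFinite (G.neighborSet v ∩ W))).mpr (hW v hv)
  omega

end SimpleGraph

theorem network_dynamics_forest_bound_general {V : Type*} [Fintype V]
    (G : SimpleGraph V) [DecidableRel G.Adj]
    (ω : V → ℝ) (d : ℕ) (f : Sym2 V → ℝ → ℝ)
    (hfib : ∀ e ∈ G.edgeSet, ∀ y : ℝ, {z : ℝ | f e z = y}.encard ≤ (d : ℕ∞))
    (X : Set (V → ℝ))
    (hX : X = {x : V → ℝ | ∀ v : V,
      ω v + ∑ w ∈ G.neighborFinset v, f s(w, v) (x w - x v) = 0}) :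
    Compatible X G d ∧
      ∀ (W : Set V), (G.induce W).IsAcyclic →
        (∀ v ∈ W, (G.neighborSet v ∩ W).Nonempty) →
        ∀ l c : ℕ,
          l = {v | v ∈ W ∧ (G.neighborSet v ∩ W).ncard = 1}.ncard →
          c = Nat.card (G.induce W).ConnectedComponent →
          (cdim X : ℤ) ≤ (Fintype.card V : ℤ) - W.ncard + l - c := by
  have hcomp : Compatible X G d := hX ▸ compatible_networkEquilibria ω hfib
  refine ⟨hcomp, fun W hW hiso l c hl hc ↦ ?_⟩
  obtain ⟨S, hSW, -, hcount, hspan⟩ := exists_spans_compl_union W hW ∅ subsingleton_empty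
  obtain ⟨d', hd'⟩ := hspan.exists_determines_univ hcomp
  have hcdim : cdim X ≤ Wᶜ.ncard + S.ncard :=
    (ncard_union_eq (disjoint_compl_left.mono_right hSW)) ▸ cdim_le_ncard hd'
  have hV : W.ncard + Wᶜ.ncard = Fintype.card V := by
    rw [ncard_add_ncard_compl, Nat.card_eq_fintype_card]
  rw [leafWeight_eq_ncard hiso, ← hl, ← hc] at hcount
  omega

/-- Forest Bound for network dynamics: let `ω ∈ ℝ^V` and for each edge `e` of `G`
let `f e : ℝ → ℝ` be an odd function all of whose fibers have at most `d`
elements.  Then the set `X` of equilibria of the network dynamical system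
`ẋ_v = ω_v + ∑_{w ∈ N(v)} f {w,v} (x_w - x_v)` is `d`-compatible with `G`, and
for every induced forest `W` of `G` without isolated vertices, with `l` leaves
and `c` components, `cdim X ≤ |V| - |W| + l - c`. -/
theorem network_dynamics_forest_bound {V : Type*} [Fintype V] [DecidableEq V]
    (G : SimpleGraph V) [DecidableRel G.Adj]
    (ω : V → ℝ) (d : ℕ) (f : Sym2 V → ℝ → ℝ)
    (hodd : ∀ e ∈ G.edgeSet, ∀ y : ℝ, f e (-y) = - f e y)
    (hfib : ∀ e ∈ G.edgeSet, ∀ y : ℝ, {z : ℝ | f e z = y}.encard ≤ (d : ℕ∞))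
    (X : Set (V → ℝ))
    (hX : X = {x : V → ℝ | ∀ v : V,
      ω v + ∑ w ∈ G.neighborFinset v, f s(w, v) (x w - x v) = 0}) :
    Compatible X G d ∧
      ∀ (W : Set V), (G.induce W).IsAcyclic →
        (∀ v ∈ W, (G.neighborSet v ∩ W).Nonempty) →
        ∀ l c : ℕ,
          l = {v | v ∈ W ∧ (G.neighborSet v ∩ W).ncard = 1}.ncard →
          c = Nat.card (G.induce W).ConnectedComponent →
          (cdim X : ℤ) ≤ (Fintype.card V : ℤ) - W.ncard + l - c :=
  network_dynamics_forest_bound_general G ω d f hfib X hX
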